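/- arXiv:1812.08850 — 2 statements merged into one kernel-verified Lean document; each statement's English description precedes it below -/
import Mathlib

section
/- Let Q be a finite set of colored balls in which the maximum color class size is attained by at least two distinct colors, one of which is β. Let x ∉ Q be a ball with c(x) = β and let z ∈ Q. Then the set (Q \ {z}) ∪ {x} has a plurality ball if and only if c(z) ≠ β; moreover, when c(z) ≠ β, every plurality ball of (Q \ {z}) ∪ {x} has color β. -/
/-- The color class of color `γ` in the finite set `Q` of balls, under coloring `c`. -/
def colorClass {Ball Color : Type*} [DecidableEq Ball] [DecidableEq Color]
    (c : Ball → Color) (Q : Finset Ball) (γ : Color) : Finset Ball :=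
  Q.filter (fun b => c b = γ)

/-- `x` is a plurality ball of `Q`: its color class is strictly larger than
every other color class. -/
def IsPlurality {Ball Color : Type*} [DecidableEq Ball] [DecidableEq Color]
    (c : Ball → Color) (Q : Finset Ball) (x : Ball) : Prop :=
  x ∈ Q ∧ ∀ γ : Color, γ ≠ c x → (colorClass c Q γ).card < (colorClass c Q (c x)).card

/-!
Swapping `z` out and `x` in changes the class sizes only by `-1` at `c z` and `+1` at `β`.
If `c z = β`, the classes of `β` and `γ` keep their sizes and stay tied at the maximum, so there
is no plurality ball. Otherwise the class of `β` grows by one while no other class grows, so `β`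
becomes the unique largest color.
-/

section Swap

variable {Ball Color : Type*} [DecidableEq Ball] [DecidableEq Color] (c : Ball → Color)

theorem card_colorClass_insert {Q : Finset Ball} {x : Ball} (hx : x ∉ Q) (δ : Color) :
    (colorClass c (insert x Q) δ).card =
      (colorClass c Q δ).card + if c x = δ then 1 else 0 := by
  unfold colorClass
  rw [Finset.filter_insert]
  split_ifs
  · exact Finset.card_insert_of_notMem fun h => hx (Finset.mem_of_mem_filter x h)
  · rfl

theorem card_colorClass_sdiff_singleton {Q : Finset Ball} {z : Ball} (hz : z ∈ Q) (δ : Color) :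
    (colorClass c (Q \ {z}) δ).card + (if c z = δ then 1 else 0) =
      (colorClass c Q δ).card := by
  unfold colorClass
  rw [Finset.sdiff_singleton_eq_erase, Finset.filter_erase]
  split_ifs with hzδ
  · exact Finset.card_erase_add_one (Finset.mem_filter.mpr ⟨hz, hzδ⟩)
  · have hz' : z ∉ Q.filter (fun b => c b = δ) := fun h => hzδ (Finset.mem_filter.mp h).2
    rw [Finset.erase_eq_of_notMem hz', add_zero]

theorem card_colorClass_swap {Q : Finset Ball} {x z : Ball} (hx : x ∉ Q) (hz : z ∈ Q)
    (δ : Color) :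
    (colorClass c (insert x (Q \ {z})) δ).card + (if c z = δ then 1 else 0) =
      (colorClass c Q δ).card + if c x = δ then 1 else 0 := by
  rw [card_colorClass_insert c (fun h => hx (Finset.sdiff_subset h)),
    ← card_colorClass_sdiff_singleton c hz]
  ac_rfl

theorem IsPlurality.color_eq_of_forall_le {Q : Finset Ball} {p : Ball} {β : Color}
    (hp : IsPlurality c Q p) (hmax : ∀ δ, (colorClass c Q δ).card ≤ (colorClass c Q β).card) :
    c p = β := by
  by_contra hpβ
  exact (hp.2 β (Ne.symm hpβ)).not_ge (hmax (c p))

theorem not_isPlurality_of_tie {Q : Finset Ball} {β γ : Color} (hβγ : γ ≠ β)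
    (htie : (colorClass c Q β).card = (colorClass c Q γ).card)
    (hmax : ∀ δ, (colorClass c Q δ).card ≤ (colorClass c Q β).card) (p : Ball) :
    ¬ IsPlurality c Q p := by
  intro hp
  have hpβ : c p = β := hp.color_eq_of_forall_le c hmax
  have hγ := hp.2 γ (hpβ ▸ hβγ)
  rw [hpβ, htie] at hγ
  exact hγ.false

end Swap

/-- suppose the maximum color class size of `Q` is attained by at least
two distinct colors, one of which is `β`; let `x ∉ Q` with `c x = β` and `z ∈ Q`.
Then `(Q \ {z}) ∪ {x}` has a plurality ball iff `c z ≠ β`; moreover when `c z ≠ β`,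
every plurality ball of `(Q \ {z}) ∪ {x}` has color `β`. -/
theorem plurality_after_swap_iff {Ball Color : Type*}
    [DecidableEq Ball] [DecidableEq Color]
    (c : Ball → Color) (Q : Finset Ball) (β γ : Color) (hβγ : γ ≠ β)
    (htie : (colorClass c Q β).card = (colorClass c Q γ).card)
    (hmax : ∀ δ : Color, (colorClass c Q δ).card ≤ (colorClass c Q β).card)
    (x : Ball) (hx : x ∉ Q) (hcx : c x = β)
    (z : Ball) (hz : z ∈ Q) :
    ((∃ p, IsPlurality c (insert x (Q \ {z})) p) ↔ c z ≠ β) ∧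
      (c z ≠ β → ∀ p, IsPlurality c (insert x (Q \ {z})) p → c p = β) := by
  have hswap := card_colorClass_swap c hx hz
  set Q' := insert x (Q \ {z})
  have hle : ∀ δ, δ ≠ β → (colorClass c Q' δ).card ≤ (colorClass c Q β).card := by
    intro δ hδ
    have := hswap δ
    rw [hcx, if_neg hδ.symm] at this
    have := hmax δ
    omega
  have hβ := hswap β
  rw [hcx, if_pos rfl] at hβ
  have hmax' : ∀ δ, (colorClass c Q' δ).card ≤ (colorClass c Q' β).card := by
    intro δ
    rcases eq_or_ne δ β with rfl | hδ
    · rfl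
    · have := hle δ hδ
      split_ifs at hβ <;> omega
  by_cases hzβ : c z = β
  · have hγ := hswap γ
    rw [hzβ, hcx, if_neg hβγ.symm] at hγ
    rw [if_pos hzβ] at hβ
    have htie' : (colorClass c Q' β).card = (colorClass c Q' γ).card := by omega
    simpa [hzβ] using not_isPlurality_of_tie c hβγ htie' hmax'
  · rw [if_neg hzβ] at hβ
    have hlt : ∀ δ, δ ≠ β → (colorClass c Q' δ).card < (colorClass c Q' β).card :=
      fun δ hδ => by have := hle δ hδ; omega
    exact ⟨⟨fun _ => hzβ, fun _ => ⟨x, Finset.mem_insert_self x _, hcx ▸ hlt⟩⟩,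
      fun _ p hp => hp.color_eq_of_forall_le c hmax'⟩
end

section
/- Let l ≥ 1, let B be a set of l balls all of color β, and let T be a set of l+1 balls disjoint from B none of which has color β. Then the set B ∪ T has no plurality ball if and only if some color occurs exactly l times among the balls of T. -/
/-!
The color class of `β` in `B ∪ T` is `B`, of size `l`, and every other color class is the
corresponding class of `T`. Since two distinct classes of `T` share its `l + 1` balls, a class
of size `l` in `T` leaves at most one ball to every other color, so neither `β` nor any color
of `T` can win. Conversely, if no class of `T` has size `l`, then either all of `T` is one color,
which beats the `l` balls of `B`, or every class of `T` is smaller than `l` and `β` wins.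
-/

open Finset

section ColorClass

variable {Ball Color : Type*} [DecidableEq Ball] [DecidableEq Color] (c : Ball → Color)

@[simp]
theorem mem_colorClass {Q : Finset Ball} {γ : Color} {x : Ball} :
    x ∈ colorClass c Q γ ↔ x ∈ Q ∧ c x = γ :=
  mem_filter

theorem colorClass_subset (Q : Finset Ball) (γ : Color) : colorClass c Q γ ⊆ Q :=
  filter_subset _ _

theorem card_colorClass_le (Q : Finset Ball) (γ : Color) : #(colorClass c Q γ) ≤ #Q :=
  card_le_card (colorClass_subset c Q γ)

theorem card_colorClass_add_card_colorClass_le (Q : Finset Ball) {γ δ : Color} (h : γ ≠ δ) :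
    #(colorClass c Q γ) + #(colorClass c Q δ) ≤ #Q := by
  have hdisj : Disjoint (colorClass c Q γ) (colorClass c Q δ) :=
    disjoint_left.2 fun _ hγ hδ =>
      h (((mem_colorClass c).1 hγ).2.symm.trans ((mem_colorClass c).1 hδ).2)
  rw [← card_union_of_disjoint hdisj]
  exact card_le_card (union_subset (colorClass_subset c Q γ) (colorClass_subset c Q δ))

theorem exists_isPlurality_iff (Q : Finset Ball) :
    (∃ p, IsPlurality c Q p) ↔
      ∃ γ, 0 < #(colorClass c Q γ) ∧ ∀ δ ≠ γ, #(colorClass c Q δ) < #(colorClass c Q γ) := by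
  constructor
  · rintro ⟨p, hp, hmax⟩
    exact ⟨c p, card_pos.2 ⟨p, (mem_colorClass c).2 ⟨hp, rfl⟩⟩, hmax⟩
  · rintro ⟨γ, hpos, hmax⟩
    obtain ⟨p, hp⟩ := card_pos.1 hpos
    obtain ⟨hpQ, rfl⟩ := (mem_colorClass c).1 hp
    exact ⟨p, hpQ, hmax⟩

theorem card_colorClass_union {B T : Finset Ball} {β : Color}
    (hB : ∀ x ∈ B, c x = β) (hT : ∀ x ∈ T, c x ≠ β) (γ : Color) :
    #(colorClass c (B ∪ T) γ) = if γ = β then #B else #(colorClass c T γ) := by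
  unfold colorClass
  rw [filter_union]
  split_ifs with hγ
  · subst hγ
    rw [filter_true_of_mem hB, filter_false_of_mem hT, union_empty]
  · rw [filter_false_of_mem fun x hx h => hγ (h.symm.trans (hB x hx)), empty_union]

theorem exists_isPlurality_union_iff {B T : Finset Ball} {β : Color} {l : ℕ}
    (hBcard : #B = l) (hB : ∀ x ∈ B, c x = β) (hTcard : #T = l + 1) (hT : ∀ x ∈ T, c x ≠ β) :
    (∃ p, IsPlurality c (B ∪ T) p) ↔
      (∀ γ, #(colorClass c T γ) < l) ∨ ∃ γ, #(colorClass c T γ) = l + 1 := by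
  have hβ : #(colorClass c T β) = 0 := by
    rw [card_eq_zero]
    exact filter_false_of_mem hT
  simp only [exists_isPlurality_iff, card_colorClass_union c hB hT, hBcard]
  constructor
  · rintro ⟨γ, hpos, hmax⟩
    by_cases hγ : γ = β
    · subst hγ
      refine .inl fun δ => ?_
      by_cases hδ : δ = γ
      · simpa [hδ, hβ] using hpos
      · simpa [hδ] using hmax δ hδ
    · have := hmax β (Ne.symm hγ)
      simp only [if_neg hγ] at this
      exact .inr ⟨γ, le_antisymm (hTcard ▸ card_colorClass_le c T γ) this⟩
  · rintro (hlt | ⟨γ, hγ⟩)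
    · refine ⟨β, by simpa [hβ] using hlt β, fun δ hδ => ?_⟩
      simpa [hδ] using hlt δ
    · have hγβ : γ ≠ β := by rintro rfl; omega
      refine ⟨γ, by simp [hγβ, hγ], fun δ hδ => ?_⟩
      have := card_colorClass_add_card_colorClass_le c T hδ
      split_ifs <;> omega

end ColorClass

theorem no_plurality_iff_exact_class_general {Ball Color : Type*}
    [DecidableEq Ball] [DecidableEq Color]
    (c : Ball → Color) (l : ℕ) (hl : 1 ≤ l) (β : Color)
    (B T : Finset Ball)
    (hBcard : B.card = l) (hB : ∀ x ∈ B, c x = β)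
    (hTcard : T.card = l + 1) (hT : ∀ x ∈ T, c x ≠ β) :
    (¬ ∃ p, IsPlurality c (B ∪ T) p) ↔ ∃ δ : Color, (colorClass c T δ).card = l := by
  rw [exists_isPlurality_union_iff c hBcard hB hTcard hT]
  constructor
  · intro hnone
    by_contra! hne
    refine hnone (or_iff_not_imp_right.2 fun hfull γ => ?_)
    have := not_exists.1 hfull γ
    have := hne γ
    have := card_colorClass_le c T γ
    omega
  · rintro ⟨δ, hδ⟩ (hlt | ⟨γ, hγ⟩)
    · exact (hlt δ).ne hδ
    · have hγδ : γ ≠ δ := by rintro rfl; omega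
      have := card_colorClass_add_card_colorClass_le c T hγδ
      omega

/-- let `B` be `l ≥ 1` balls of color `β` and `T` be `l+1` balls disjoint
from `B`, none of color `β`.  Then `B ∪ T` has no plurality ball iff some color occurs
exactly `l` times among the balls of `T`. -/
theorem no_plurality_iff_exact_class {Ball Color : Type*}
    [DecidableEq Ball] [DecidableEq Color]
    (c : Ball → Color) (l : ℕ) (hl : 1 ≤ l) (β : Color)
    (B T : Finset Ball) (hdisj : Disjoint B T)
    (hBcard : B.card = l) (hB : ∀ x ∈ B, c x = β)
    (hTcard : T.card = l + 1) (hT : ∀ x ∈ T, c x ≠ β) :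
    (¬ ∃ p, IsPlurality c (B ∪ T) p) ↔ ∃ δ : Color, (colorClass c T δ).card = l :=
  no_plurality_iff_exact_class_general c l hl β B T hBcard hB hTcard hT
end
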